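/- Trajectory-based optimization with m-th derivative objective for the linear model: let γ > 0, m ≥ 1, t₀ < t_f, β ∈ ℝ. Among all solutions z of the linear model with z₂(t_f) = β, the functional ∫_{t₀}^{t_f} ‖∂_t^m z(t)‖₂² dt attains a unique minimum, and the minimizer satisfies z₁(t_f) = β·[1 + (2e^{−2γt_f}e^{−2t_f} − 2e^{−2γt_f}e^{−2t₀})/(e^{−2γt_f}e^{−2t₀} − e^{−2γt_f}e^{−2t_f} − ξ·e^{−2(1+γ)t₀} + ξ·e^{−2(1+γ)t_f})] with ξ = (−1−γ)^{2m−1}. Consequently z₁(t_f) → β in each of the three limits m → ∞ (γ, t₀, t_f, β fixed), t₀ → −∞ (γ, m, t_f, β fixed), and γ → ∞ (m, t₀ < t_f, β fixed). -/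

import Mathlib

open Real Filter

/-- The functional ∫_{t₀}^{t_f} ‖∂_t^m z(t)‖₂² dt evaluated on the general solution
of the linear model with constants c₁, c₂. -/
noncomputable def mDerivFunctional (γ t₀ tf : ℝ) (m : ℕ) (c₁ c₂ : ℝ) : ℝ :=
  ∫ t in t₀..tf,
    ((iteratedDeriv m (fun s => c₁ * Real.exp (-s) + c₂ * Real.exp ((-1 - γ) * s)) t) ^ 2
      + (iteratedDeriv m (fun s => c₁ * Real.exp (-s) - c₂ * Real.exp ((-1 - γ) * s)) t) ^ 2)

/-- The error factor χ with ξ = (−1−γ)^{2m−1}, so that the optimal point of interest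
is z₁(t_f) = β·(1 + χ). -/
noncomputable def chi17 (γ t₀ tf : ℝ) (m : ℕ) : ℝ :=
  (2 * Real.exp (-2 * γ * tf) * Real.exp (-2 * tf)
      - 2 * Real.exp (-2 * γ * tf) * Real.exp (-2 * t₀))
    / (Real.exp (-2 * γ * tf) * Real.exp (-2 * t₀)
        - Real.exp (-2 * γ * tf) * Real.exp (-2 * tf)
        - (-1 - γ) ^ (2 * m - 1) * Real.exp ((-1 - γ) * (2 * t₀))
        + (-1 - γ) ^ (2 * m - 1) * Real.exp ((-1 - γ) * (2 * tf)))

/-! The `m`-th derivatives of the two components are `c₁ (-1)ᵐ e^{-t} ± c₂ λᵐ e^{λt}` with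
`λ = -1 - γ`, so the cross terms cancel in the sum of squares and the functional is the diagonal
positive definite form `A c₁² + B c₂²` (`slowModeWeight`, `fastModeWeight`). Its unique minimum on
the line `c₁ e^{-t_f} - c₂ e^{λ t_f} = β` is the orthogonal projection of `0` for the weighted
inner product, which gives `z₁(t_f) = β (1 + χ)` explicitly. Finally
`|χ| ≤ 2 / (1 + (1 + γ)^{2m-1} e^{2γ(t_f - t₀)})`, and the right side tends to `0` in each of the
three limits. -/

theorem exp_two_mul_eq_sq (x : ℝ) : exp (2 * x) = exp x ^ 2 := by
  rw [two_mul, exp_add, sq]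

theorem iteratedDeriv_const_mul_exp_add (c₁ c₂ a b : ℝ) (m : ℕ) :
    iteratedDeriv m (fun s => c₁ * exp (a * s) + c₂ * exp (b * s)) =
      fun t => c₁ * a ^ m * exp (a * t) + c₂ * b ^ m * exp (b * t) := by
  funext t
  rw [iteratedDeriv_fun_add (by fun_prop) (by fun_prop), iteratedDeriv_const_mul_field,
    iteratedDeriv_const_mul_field, iteratedDeriv_exp_const_mul, iteratedDeriv_exp_const_mul]
  ring

theorem iteratedDeriv_const_mul_exp_sub (c₁ c₂ a b : ℝ) (m : ℕ) :
    iteratedDeriv m (fun s => c₁ * exp (a * s) - c₂ * exp (b * s)) =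
      fun t => c₁ * a ^ m * exp (a * t) - c₂ * b ^ m * exp (b * t) := by
  funext t
  rw [iteratedDeriv_fun_sub (by fun_prop) (by fun_prop), iteratedDeriv_const_mul_field,
    iteratedDeriv_const_mul_field, iteratedDeriv_exp_const_mul, iteratedDeriv_exp_const_mul]
  ring

theorem integral_exp_const_mul {k : ℝ} (hk : k ≠ 0) (a b : ℝ) :
    ∫ t in a..b, exp (k * t) = (exp (k * b) - exp (k * a)) / k := by
  rw [intervalIntegral.integral_comp_mul_left (fun t => exp t) hk, integral_exp, smul_eq_mul]
  ring

theorem integral_sq_add_sq_const_mul_exp {a b : ℝ} (ha : a ≠ 0) (hb : b ≠ 0) (c₁ c₂ t₀ tf : ℝ) :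
    ∫ t in t₀..tf, ((c₁ * exp (a * t) + c₂ * exp (b * t)) ^ 2
        + (c₁ * exp (a * t) - c₂ * exp (b * t)) ^ 2) =
      c₁ ^ 2 * (exp (2 * a * tf) - exp (2 * a * t₀)) / a
        + c₂ ^ 2 * (exp (2 * b * tf) - exp (2 * b * t₀)) / b := by
  have hsq (t : ℝ) : (c₁ * exp (a * t) + c₂ * exp (b * t)) ^ 2
      + (c₁ * exp (a * t) - c₂ * exp (b * t)) ^ 2
      = 2 * c₁ ^ 2 * exp (2 * a * t) + 2 * c₂ ^ 2 * exp (2 * b * t) := by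
    rw [mul_assoc 2 a, mul_assoc 2 b, exp_two_mul_eq_sq, exp_two_mul_eq_sq]
    ring
  have hint (k c : ℝ) : IntervalIntegrable (fun t => c * exp (k * t)) MeasureTheory.volume t₀ tf :=
    (by fun_prop : Continuous fun t => c * exp (k * t)).intervalIntegrable t₀ tf
  simp only [hsq]
  rw [intervalIntegral.integral_add (hint _ _) (hint _ _), intervalIntegral.integral_const_mul,
    intervalIntegral.integral_const_mul, integral_exp_const_mul (mul_ne_zero two_ne_zero ha),
    integral_exp_const_mul (mul_ne_zero two_ne_zero hb)]
  field_simp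

noncomputable def slowModeWeight (t₀ tf : ℝ) : ℝ := exp (-2 * t₀) - exp (-2 * tf)

noncomputable def fastModeWeight (γ t₀ tf : ℝ) (m : ℕ) : ℝ :=
  (-1 - γ) ^ (2 * m - 1) * (exp ((-1 - γ) * (2 * tf)) - exp ((-1 - γ) * (2 * t₀)))

theorem mDerivFunctional_eq {γ : ℝ} (hγ : γ ≠ -1) {m : ℕ} (hm : 1 ≤ m) (t₀ tf c₁ c₂ : ℝ) :
    mDerivFunctional γ t₀ tf m c₁ c₂ =
      slowModeWeight t₀ tf * c₁ ^ 2 + fastModeWeight γ t₀ tf m * c₂ ^ 2 := by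
  have hrate : -1 - γ ≠ 0 := by contrapose! hγ; linarith
  have hneg (s : ℝ) : exp (-s) = exp ((-1) * s) := by rw [neg_one_mul]
  have hpow : (-1 - γ) ^ (2 * m) = (-1 - γ) ^ (2 * m - 1) * (-1 - γ) := by
    rw [← pow_succ]; congr 1; omega
  simp only [mDerivFunctional, hneg, iteratedDeriv_const_mul_exp_add,
    iteratedDeriv_const_mul_exp_sub]
  rw [integral_sq_add_sq_const_mul_exp (by norm_num) hrate, slowModeWeight, fastModeWeight]
  rw [mul_pow, mul_pow, ← pow_mul, ← pow_mul, mul_comm m 2, hpow, pow_mul, neg_one_sq, one_pow]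
  field_simp
  ring

theorem exists_unique_min_weighted_sq_on_line {A B u : ℝ} (hA : 0 < A) (hB : 0 < B) (hu : u ≠ 0)
    (v β : ℝ) :
    ∃ d₁ d₂ : ℝ, d₁ * u - d₂ * v = β ∧
      (∀ c₁ c₂ : ℝ, c₁ * u - c₂ * v = β →
        A * d₁ ^ 2 + B * d₂ ^ 2 ≤ A * c₁ ^ 2 + B * c₂ ^ 2 ∧
        (A * c₁ ^ 2 + B * c₂ ^ 2 = A * d₁ ^ 2 + B * d₂ ^ 2 → c₁ = d₁ ∧ c₂ = d₂)) ∧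
      d₁ * u + d₂ * v = β * (u ^ 2 * B - v ^ 2 * A) / (u ^ 2 * B + v ^ 2 * A) := by
  have hS : 0 < u ^ 2 * B + v ^ 2 * A := by positivity
  set S := u ^ 2 * B + v ^ 2 * A
  set d₁ := β * u * B / S
  set d₂ := -(β * v * A) / S
  refine ⟨d₁, d₂, by simp only [d₁, d₂, S]; field_simp; ring, fun c₁ c₂ hc => ?_,
    by simp only [d₁, d₂, S]; field_simp; ring⟩
  have hpyth : A * c₁ ^ 2 + B * c₂ ^ 2
      = A * d₁ ^ 2 + B * d₂ ^ 2 + (A * (c₁ - d₁) ^ 2 + B * (c₂ - d₂) ^ 2) := by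
    simp only [d₁, d₂, S]
    field_simp
    linear_combination (2 * β * A * B * S) * hc
  have hdist : 0 ≤ A * (c₁ - d₁) ^ 2 + B * (c₂ - d₂) ^ 2 := by positivity
  refine ⟨by linarith, fun heq => ?_⟩
  obtain ⟨h₁, h₂⟩ := (add_eq_zero_iff_of_nonneg (by positivity) (by positivity)).mp
    (show A * (c₁ - d₁) ^ 2 + B * (c₂ - d₂) ^ 2 = 0 by linarith)
  simp only [mul_eq_zero, hA.ne', hB.ne', false_or, pow_eq_zero_iff two_ne_zero, sub_eq_zero]
    at h₁ h₂
  exact ⟨h₁, h₂⟩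

theorem slowModeWeight_pos {t₀ tf : ℝ} (ht : t₀ < tf) : 0 < slowModeWeight t₀ tf :=
  sub_pos.mpr (exp_lt_exp.mpr (by linarith))

theorem neg_one_sub_pow_eq {γ : ℝ} {m : ℕ} (hm : 1 ≤ m) :
    (-1 - γ) ^ (2 * m - 1) = -(1 + γ) ^ (2 * m - 1) := by
  rw [show -1 - γ = -(1 + γ) by ring, Odd.neg_pow ⟨m - 1, by omega⟩]

theorem fastModeWeight_eq {γ : ℝ} {m : ℕ} (hm : 1 ≤ m) (t₀ tf : ℝ) :
    fastModeWeight γ t₀ tf m =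
      (1 + γ) ^ (2 * m - 1) * (exp ((-1 - γ) * (2 * t₀)) - exp ((-1 - γ) * (2 * tf))) := by
  rw [fastModeWeight, neg_one_sub_pow_eq hm]
  ring

theorem fastModeWeight_pos {γ : ℝ} (hγ : -1 < γ) {m : ℕ} (hm : 1 ≤ m) {t₀ tf : ℝ}
    (ht : t₀ < tf) : 0 < fastModeWeight γ t₀ tf m := by
  rw [fastModeWeight_eq hm]
  exact mul_pos (pow_pos (by linarith) _) (sub_pos.mpr (exp_lt_exp.mpr (by nlinarith)))

theorem chi17_eq (γ t₀ tf : ℝ) (m : ℕ) :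
    chi17 γ t₀ tf m = -2 * (exp (-2 * γ * tf) * slowModeWeight t₀ tf) /
      (exp (-2 * γ * tf) * slowModeWeight t₀ tf + fastModeWeight γ t₀ tf m) := by
  rw [chi17, slowModeWeight, fastModeWeight]
  ring

theorem one_add_chi17_eq {γ : ℝ} (hγ : -1 < γ) {m : ℕ} (hm : 1 ≤ m) {t₀ tf : ℝ}
    (ht : t₀ < tf) :
    1 + chi17 γ t₀ tf m =
      (exp (-tf) ^ 2 * fastModeWeight γ t₀ tf m - exp ((-1 - γ) * tf) ^ 2 * slowModeWeight t₀ tf)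
        / (exp (-tf) ^ 2 * fastModeWeight γ t₀ tf m
          + exp ((-1 - γ) * tf) ^ 2 * slowModeWeight t₀ tf) := by
  have hA := slowModeWeight_pos ht
  have hB := fastModeWeight_pos hγ hm ht
  have hv : exp ((-1 - γ) * tf) ^ 2 = exp (-tf) ^ 2 * exp (-2 * γ * tf) := by
    rw [← exp_two_mul_eq_sq, ← exp_two_mul_eq_sq, ← exp_add]
    ring_nf
  rw [chi17_eq, hv]
  field_simp
  ring

theorem abs_chi17_le {γ : ℝ} (hγ : 0 ≤ γ) {m : ℕ} (hm : 1 ≤ m) {t₀ tf : ℝ} (ht : t₀ < tf) :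
    |chi17 γ t₀ tf m| ≤ 2 / (1 + (1 + γ) ^ (2 * m - 1) * exp (2 * γ * (tf - t₀))) := by
  rw [chi17_eq]
  set x := exp (-2 * γ * tf) * slowModeWeight t₀ tf
  set K := (1 + γ) ^ (2 * m - 1) * exp (2 * γ * (tf - t₀))
  have hx : 0 < x := mul_pos (exp_pos _) (slowModeWeight_pos ht)
  have hK : 0 < K := by positivity
  have hB : K * x ≤ fastModeWeight γ t₀ tf m := by
    have hexp : exp (2 * γ * (tf - t₀)) * x
        = exp ((-1 - γ) * (2 * t₀)) - exp (-2 * γ * t₀ - 2 * tf) := by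
      simp only [x, slowModeWeight, mul_sub, ← exp_add]
      ring_nf
    rw [fastModeWeight_eq hm, mul_assoc, hexp]
    gcongr (1 + γ) ^ (2 * m - 1) * (_ - exp ?_)
    nlinarith
  have hKx : 0 < K * x := mul_pos hK hx
  rw [abs_div, abs_of_neg (by linarith), abs_of_pos (by linarith),
    div_le_div_iff₀ (by linarith) (by linarith)]
  nlinarith

theorem tendsto_chi17_nhds_zero {α : Type*} {l : Filter α} {g s : α → ℝ} {k : α → ℕ} {tf : ℝ}
    (hparams : ∀ᶠ x in l, 0 ≤ g x ∧ 1 ≤ k x ∧ s x < tf)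
    (hgrowth : Tendsto (fun x => (1 + g x) ^ (2 * k x - 1) * exp (2 * g x * (tf - s x))) l atTop) :
    Tendsto (fun x => chi17 (g x) (s x) tf (k x)) l (nhds 0) :=
  squeeze_zero_norm' (hparams.mono fun _ ⟨hg, hk, hs⟩ => abs_chi17_le hg hk hs)
    (tendsto_const_nhds.div_atTop (tendsto_atTop_add_const_left _ 1 hgrowth))

/-- Trajectory-based optimization with m-th derivative objective for
the linear model: among all solutions with z₂(t_f) = β the functional
∫_{t₀}^{t_f} ‖∂_t^m z‖₂² dt attains a unique minimum, the minimizer satisfies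
z₁(t_f) = β·(1 + χ) with χ as in `chi17`, and z₁(t_f) → β in each of the limits
m → ∞, t₀ → −∞, γ → ∞. -/
theorem stmt17 (γ : ℝ) (hγ : 0 < γ) (m : ℕ) (hm : 1 ≤ m) (t₀ tf β : ℝ)
    (ht : t₀ < tf) :
    (∃ d₁ d₂ : ℝ,
      d₁ * exp (-tf) - d₂ * exp ((-1 - γ) * tf) = β ∧
      (∀ c₁ c₂ : ℝ, c₁ * exp (-tf) - c₂ * exp ((-1 - γ) * tf) = β →
        mDerivFunctional γ t₀ tf m d₁ d₂ ≤ mDerivFunctional γ t₀ tf m c₁ c₂ ∧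
        (mDerivFunctional γ t₀ tf m c₁ c₂ = mDerivFunctional γ t₀ tf m d₁ d₂ →
          c₁ = d₁ ∧ c₂ = d₂)) ∧
      d₁ * exp (-tf) + d₂ * exp ((-1 - γ) * tf) = β * (1 + chi17 γ t₀ tf m)) ∧
    Tendsto (fun k : ℕ => β * (1 + chi17 γ t₀ tf k)) atTop (nhds β) ∧
    Tendsto (fun s : ℝ => β * (1 + chi17 γ s tf m)) atBot (nhds β) ∧
    Tendsto (fun g : ℝ => β * (1 + chi17 g t₀ tf m)) atTop (nhds β) := by
  have hγ' : -1 < γ := by linarith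
  have hlim {α : Type} {l : Filter α} {f : α → ℝ} (hf : Tendsto f l (nhds 0)) :
      Tendsto (fun x => β * (1 + f x)) l (nhds β) := by
    simpa using (hf.const_add 1).const_mul β
  refine ⟨?_, hlim ?_, hlim ?_, hlim ?_⟩
  · obtain ⟨d₁, d₂, hline, hmin, hvalue⟩ := exists_unique_min_weighted_sq_on_line
      (slowModeWeight_pos ht) (fastModeWeight_pos hγ' hm ht) (exp_pos (-tf)).ne'
      (exp ((-1 - γ) * tf)) β
    refine ⟨d₁, d₂, hline, ?_, ?_⟩
    · simpa only [mDerivFunctional_eq hγ'.ne' hm] using hmin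
    · rw [hvalue, one_add_chi17_eq hγ' hm ht, mul_div_assoc]
  · refine tendsto_chi17_nhds_zero ((eventually_ge_atTop 1).mono fun k hk => ⟨hγ.le, hk, ht⟩) ?_
    have hodd : Tendsto (fun k : ℕ => 2 * k - 1) atTop atTop :=
      tendsto_atTop_mono (fun k => show k ≤ 2 * k - 1 by omega) tendsto_id
    exact ((tendsto_pow_atTop_atTop_of_one_lt (by linarith)).comp hodd).atTop_mul_const
      (exp_pos _)
  · refine tendsto_chi17_nhds_zero ((eventually_lt_atBot tf).mono fun s hs => ⟨hγ.le, hm, hs⟩) ?_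
    have hlin : Tendsto (fun s : ℝ => 2 * γ * (tf - s)) atBot atTop := by
      simpa only [sub_eq_add_neg] using (tendsto_atTop_add_const_left _ tf
        tendsto_neg_atBot_atTop).const_mul_atTop (by positivity : (0 : ℝ) < 2 * γ)
    exact (tendsto_exp_atTop.comp hlin).const_mul_atTop (by positivity)
  · refine tendsto_chi17_nhds_zero ((eventually_ge_atTop 0).mono fun g hg => ⟨hg, hm, ht⟩) ?_
    have hpow : Tendsto (fun g : ℝ => (1 + g) ^ (2 * m - 1)) atTop atTop :=
      (tendsto_pow_atTop (by omega)).comp (tendsto_atTop_add_const_left _ 1 tendsto_id)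
    have hlin : Tendsto (fun g : ℝ => 2 * g * (tf - t₀)) atTop atTop :=
      (tendsto_id.const_mul_atTop two_pos).atTop_mul_const (sub_pos.mpr ht)
    exact hpow.atTop_mul_atTop₀ (tendsto_exp_atTop.comp hlin)
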